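/- (Equivalence of Problem (SPP) and formulation (SPP-F2).) With the subdivision setup, D(x_s,x_t) equals the optimal value of the following mixed-integer program (SPP-F2) in the variables d_i ≥ 0 (i ∈ V), z_{ij} ∈ {0,1} ((i,j) ∈ A), λ_{ije} ≥ 0 ((i,j) ∈ A, e ∈ Ext(F_{ij})), ρ_{hij} ≥ 0 (i ∈ V∖{s,t}, (h,i),(i,j) ∈ A), Φ_{hije} ≥ 0 (i ∈ V∖{s,t}, (h,i),(i,j) ∈ A, e ∈ Ext(F_{hi})), Ψ_{hije} ≥ 0 (i ∈ V∖{s,t}, (h,i),(i,j) ∈ A, e ∈ Ext(F_{ij})): minimize Σ_{i∈V} ω_i d_i subject to: Σ_{(s,j)∈A} z_{sj} − Σ_{(h,s)∈A} z_{hs} = 1; Σ_{(i,j)∈A} z_{ij} − Σ_{(h,i)∈A} z_{hi} = 0 for all i ∈ V∖{s,t}; Σ_{(t,j)∈A} z_{tj} − Σ_{(h,t)∈A} z_{ht} = −1; Σ_{(h,i)∈A} z_{hi} ≤ 1 and Σ_{(i,j)∈A} z_{ij} ≤ 1 for all i ∈ V; d_s ≥ Σ_{(s,j)∈A} ‖Σ_{e∈Ext(F_{sj})}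 λ_{sje} e − x_s z_{sj}‖_{p_s}; d_i ≥ Σ_{(h,i)∈A} Σ_{(i,j)∈A} ‖Σ_{e∈Ext(F_{ij})} Ψ_{hije} e − Σ_{e∈Ext(F_{hi})} Φ_{hije} e‖_{p_i} for all i ∈ V∖{s,t}; d_t ≥ Σ_{(h,t)∈A} ‖x_t z_{ht} − Σ_{e∈Ext(F_{ht})} λ_{hte} e‖_{p_t}; Σ_{e∈Ext(F_{ij})} λ_{ije} = z_{ij} for all (i,j) ∈ A; Σ_{(i,j)∈A} ρ_{hij} = z_{hi} for all i ∈ V∖{s,t}, (h,i) ∈ A; Σ_{(h,i)∈A} ρ_{hij} = z_{ij} for all i ∈ V∖{s,t}, (i,j) ∈ A; Σ_{e∈Ext(F_{hi})} Φ_{hije} = ρ_{hij} and Σ_{e∈Ext(F_{ij})} Ψ_{hije} = ρ_{hij} for all i ∈ V∖{s,t}, (h,i),(i,j) ∈ A; Σ_{(i,j)∈A} Φ_{hije} = λ_{hie} for all i ∈ V∖{s,t}, (h,i) ∈ A, e ∈ Ext(F_{hi}); and Σ_{(h,i)∈A} Ψ_{hije} = λ_{ije} for all i ∈ V∖{s,t},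 (i,j) ∈ A, e ∈ Ext(F_{ij}). -/

import Mathlib

open scoped BigOperators ENNReal

attribute [local instance] Classical.propDecidable

/-- The ℓ_p norm on ℝ^d for an extended-real exponent `p` (with `‖x‖_∞ = max_k |x_k|`). -/
noncomputable def lpnorm {d : ℕ} (p : ℝ≥0∞) (x : Fin d → ℝ) : ℝ :=
  if p = ∞ then ⨆ k, |x k| else (∑ k, |x k| ^ p.toReal) ^ (1 / p.toReal)

/-- Out-neighbours of `i` in the adjacency relation `Adj`. -/
noncomputable def outN {m : ℕ} (Adj : Fin m → Fin m → Prop) (i : Fin m) : Finset (Fin m) :=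
  Finset.univ.filter (fun j => Adj i j)

/-- In-neighbours of `i` in the adjacency relation `Adj`. -/
noncomputable def inN {m : ℕ} (Adj : Fin m → Fin m → Prop) (i : Fin m) : Finset (Fin m) :=
  Finset.univ.filter (fun h => Adj h i)

/-!
A path with gate points `y_l` gives a feasible point of (SPP-F2) of the same cost: `z` is the
indicator of the arcs of the path, `λ_{ij·}` are convex weights writing the gate point of the arc
`(i, j)` in terms of `Ext(F_{ij})`, and `ρ`, `Φ`, `Ψ` are the products `z_{hi} z_{ij}`,
`λ_{hie} z_{ij}`, `z_{hi} λ_{ije}`; then `d_i` can be taken equal to the length travelled in `P_i`.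

Conversely, in a feasible point the arcs with `z = 1` form a simple `s`–`t` path: `s` has no
predecessor, every vertex at most one, and flow leaves every interior vertex it enters, so
following successors from `s` never revisits a vertex and must stop at `t`. The points
`∑_e λ_{ije} e` lie in the faces `F_{ij}`, and by the coupling constraints on `Φ` and `Ψ` the
vectors in the bound on `d_i` sum to the difference of the two gate points at `i`; the triangle
inequality then bounds the cost of this path by the objective. So the two sets of values
dominate each other, and their infima agree.
-/

open Finset Function

lemma lpnorm_nonneg {d : ℕ} (p : ℝ≥0∞) (x : Fin d → ℝ) : 0 ≤ lpnorm p x := by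
  unfold lpnorm
  split_ifs
  · exact Real.iSup_nonneg fun k => abs_nonneg (x k)
  · positivity

lemma lpnorm_eq_norm {d : ℕ} {p : ℝ≥0∞} (hp : p ≠ 0) (x : Fin d → ℝ) :
    lpnorm p x = ‖WithLp.toLp p x‖ := by
  unfold lpnorm
  split_ifs with h
  · subst h
    simp [PiLp.norm_eq_ciSup]
  · simp [PiLp.norm_eq_sum (ENNReal.toReal_pos hp h)]

lemma lpnorm_zero {d : ℕ} {p : ℝ≥0∞} (hp : p ≠ 0) : lpnorm p (0 : Fin d → ℝ) = 0 := by
  unfold lpnorm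
  split_ifs with h
  · simp
  · have := ENNReal.toReal_pos hp h
    simp [Real.zero_rpow this.ne', this.ne']

lemma lpnorm_sum_le {d : ℕ} {p : ℝ≥0∞} (hp : 1 ≤ p) {ι : Type*} (S : Finset ι)
    (f : ι → Fin d → ℝ) : lpnorm p (∑ i ∈ S, f i) ≤ ∑ i ∈ S, lpnorm p (f i) := by
  have : Fact (1 ≤ p) := ⟨hp⟩
  simp only [lpnorm_eq_norm (zero_lt_one.trans_le hp).ne', WithLp.toLp_sum]
  exact norm_sum_le _ _

section ZeroOneSums

variable {ι : Type*} {S : Finset ι} {f : ι → ℝ}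

lemma one_le_sum_of_eq_one (h01 : ∀ i ∈ S, f i = 0 ∨ f i = 1) {i : ι} (hi : i ∈ S)
    (hfi : f i = 1) : 1 ≤ ∑ j ∈ S, f j :=
  hfi ▸ single_le_sum (fun j hj => by rcases h01 j hj with h | h <;> simp [h]) hi

lemma exists_eq_one_of_one_le_sum (h01 : ∀ i ∈ S, f i = 0 ∨ f i = 1)
    (h : 1 ≤ ∑ i ∈ S, f i) : ∃ i ∈ S, f i = 1 := by
  obtain ⟨i, hi, hfi⟩ := exists_ne_zero_of_sum_ne_zero (by linarith : ∑ i ∈ S, f i ≠ 0)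
  exact ⟨i, hi, (h01 i hi).resolve_left hfi⟩

lemma eq_zero_of_sum_le_one (h01 : ∀ i ∈ S, f i = 0 ∨ f i = 1) (hS : ∑ i ∈ S, f i ≤ 1)
    {i j : ι} (hi : i ∈ S) (hj : j ∈ S) (hfj : f j = 1) (hij : i ≠ j) : f i = 0 := by
  refine (h01 i hi).resolve_right fun hfi => ?_
  have hpair : ∑ k ∈ {i, j}, f k ≤ ∑ k ∈ S, f k :=
    sum_le_sum_of_subset_of_nonneg (insert_subset hi (singleton_subset_iff.2 hj))
      fun k hk _ => by rcases h01 k hk with h | h <;> simp [h]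
  rw [sum_pair hij, hfi, hfj] at hpair
  linarith

end ZeroOneSums

section SimplePath

variable {α : Type*} {N : α → α → Prop}

def IsSimpleWalk (N : α → α → Prop) {j : ℕ} (γ : Fin (j + 1) → α) : Prop :=
  Injective γ ∧ ∀ l : Fin j, N (γ l.castSucc) (γ l.succ)

lemma IsSimpleWalk.snoc {j : ℕ} {γ : Fin (j + 1) → α} (hγ : IsSimpleWalk N γ) {b : α}
    (hb : N (γ (Fin.last j)) b) (hb' : b ∉ Set.range γ) :
    IsSimpleWalk N (Fin.snoc γ b : Fin (j + 2) → α) := by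
  refine ⟨Fin.snoc_injective_of_injective hγ.1 hb', fun l => ?_⟩
  induction l using Fin.lastCases with
  | last => simpa using hb
  | cast l =>
    rw [Fin.succ_castSucc, Fin.snoc_castSucc, Fin.snoc_castSucc]
    exact hγ.2 l

variable {s t : α} (hs : ∀ h, ¬ N h s) (hs_out : ∃ j, N s j)
  (hpred : ∀ h h' i, N h i → N h' i → h = h')
  (hsucc : ∀ i, i ≠ s → i ≠ t → (∃ h, N h i) → ∃ j, N i j)
include hs hs_out hpred hsucc

lemma IsSimpleWalk.exists_extension {j : ℕ} {γ : Fin (j + 1) → α} (hγ : IsSimpleWalk N γ)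
    (h0 : γ 0 = s) (hend : γ (Fin.last j) ≠ t) :
    ∃ b, N (γ (Fin.last j)) b ∧ b ∉ Set.range γ := by
  obtain ⟨b, hb⟩ : ∃ b, N (γ (Fin.last j)) b := by
    cases j with
    | zero => exact h0 ▸ hs_out
    | succ r =>
      refine hsucc _ (fun h => ?_) hend ⟨_, Fin.succ_last r ▸ hγ.2 (Fin.last r)⟩
      exact Fin.last_pos.ne' (hγ.1 (h.trans h0.symm))
  refine ⟨b, hb, fun ⟨k, hk⟩ => ?_⟩
  have hk0 : k ≠ 0 := by
    rintro rfl
    exact hs _ (h0 ▸ hk ▸ hb)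
  obtain ⟨k, rfl⟩ := Fin.exists_succ_eq.2 hk0
  have := hγ.1 (hpred _ _ _ (hk ▸ hγ.2 k) hb)
  exact (Fin.castSucc_lt_last k).ne this

variable [Fintype α]

lemma exists_simpleWalk_to_of_simpleWalk (hst : s ≠ t) :
    ∀ (k j : ℕ) (γ : Fin (j + 1) → α), Fintype.card α ≤ j + k → IsSimpleWalk N γ →
      γ 0 = s → ∃ (n : ℕ) (γ' : Fin (n + 2) → α),
        IsSimpleWalk N γ' ∧ γ' 0 = s ∧ γ' (Fin.last (n + 1)) = t := by
  intro k
  induction k with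
  | zero =>
    intro j γ hcard hγ _
    have := Fintype.card_le_of_injective γ hγ.1
    simp only [Fintype.card_fin] at this
    omega
  | succ k ih =>
    intro j γ hcard hγ h0
    by_cases hend : γ (Fin.last j) = t
    · cases j with
      | zero => exact absurd (h0.symm.trans hend) hst
      | succ n => exact ⟨n, γ, hγ, h0, hend⟩
    · obtain ⟨b, hb, hb'⟩ := hγ.exists_extension hs hs_out hpred hsucc h0 hend
      exact ih (j + 1) _ (by omega) (hγ.snoc hb hb') (by simpa using h0)

lemma exists_simpleWalk_to (hst : s ≠ t) :
    ∃ (n : ℕ) (γ : Fin (n + 2) → α), IsSimpleWalk N γ ∧ γ 0 = s ∧ γ (Fin.last (n + 1)) = t :=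
  exists_simpleWalk_to_of_simpleWalk hs hs_out hpred hsucc hst (Fintype.card α) 0
    (fun _ => s) (by omega) ⟨fun a b _ => Subsingleton.elim (α := Fin 1) a b, fun l => l.elim0⟩ rfl

end SimplePath

@[simp] lemma mem_outN {m : ℕ} {Adj : Fin m → Fin m → Prop} {i j : Fin m} :
    j ∈ outN Adj i ↔ Adj i j := by
  simp [outN]

@[simp] lemma mem_inN {m : ℕ} {Adj : Fin m → Fin m → Prop} {h i : Fin m} :
    h ∈ inN Adj i ↔ Adj h i := by
  simp [inN]

section ArcExtend

variable {α β : Type*} [AddCommMonoid β] {n : ℕ} {γ : Fin (n + 2) → α}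

/-- Extension by zero to all pairs of a function on the arcs `(γ l, γ (l + 1))`; when `γ` is
injective, at most one term of the sum is nonzero. -/
noncomputable def arcExtend (γ : Fin (n + 2) → α) (f : Fin (n + 1) → β) (i j : α) : β :=
  ∑ l, if γ l.castSucc = i ∧ γ l.succ = j then f l else 0

lemma arcExtend_arc (hγ : Injective γ) (f : Fin (n + 1) → β) (l : Fin (n + 1)) :
    arcExtend γ f (γ l.castSucc) (γ l.succ) = f l := by
  simp [arcExtend, hγ.eq_iff]

lemma arcExtend_of_not_arc {i j : α} (h : ∀ l : Fin (n + 1), γ l.castSucc = i → γ l.succ ≠ j)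
    (f : Fin (n + 1) → β) : arcExtend γ f i j = 0 :=
  sum_eq_zero fun l _ => if_neg fun hl => h l hl.1 hl.2

lemma arcExtend_induction (hγ : Injective γ) {Q : α → α → β → Prop} (f : Fin (n + 1) → β)
    (arc : ∀ l, Q (γ l.castSucc) (γ l.succ) (f l))
    (off : ∀ i j, (∀ l : Fin (n + 1), γ l.castSucc = i → γ l.succ ≠ j) → Q i j 0) (i j : α) :
    Q i j (arcExtend γ f i j) := by
  by_cases h : ∃ l : Fin (n + 1), γ l.castSucc = i ∧ γ l.succ = j
  · obtain ⟨l, rfl, rfl⟩ := h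
    simpa [arcExtend_arc hγ] using arc l
  · push Not at h
    simpa [arcExtend_of_not_arc h] using off i j h

lemma arcExtend_map₂ (hγ : Injective γ) {β' β'' : Type*} [AddCommMonoid β'] [AddCommMonoid β'']
    (φ : β → β' → β'') (hφ : φ 0 0 = 0) (f : Fin (n + 1) → β) (g : Fin (n + 1) → β')
    (i j : α) :
    φ (arcExtend γ f i j) (arcExtend γ g i j) = arcExtend γ (fun l => φ (f l) (g l)) i j := by
  by_cases h : ∃ l : Fin (n + 1), γ l.castSucc = i ∧ γ l.succ = j
  · obtain ⟨l, rfl, rfl⟩ := h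
    simp [arcExtend_arc hγ]
  · push Not at h
    simp [arcExtend_of_not_arc h, hφ]

lemma sum_ite_castSucc_eq [DecidableEq α] (hγ : Injective γ) (f : Fin (n + 1) → β)
    (k : Fin (n + 1)) :
    ∑ l, (if γ l.castSucc = γ k.castSucc then f l else 0) = f k := by
  simp [hγ.eq_iff]

lemma sum_ite_succ_eq [DecidableEq α] (hγ : Injective γ) (f : Fin (n + 1) → β)
    (k : Fin (n + 1)) :
    ∑ l, (if γ l.succ = γ k.succ then f l else 0) = f k := by
  simp [hγ.eq_iff]

variable {m : ℕ} {Adj : Fin m → Fin m → Prop} {γ : Fin (n + 2) → Fin m}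

lemma sum_outN_arcExtend (hadj : ∀ l : Fin (n + 1), Adj (γ l.castSucc) (γ l.succ))
    (f : Fin (n + 1) → β) (i : Fin m) :
    ∑ j ∈ outN Adj i, arcExtend γ f i j = ∑ l, if γ l.castSucc = i then f l else 0 := by
  unfold arcExtend
  rw [sum_comm]
  refine sum_congr rfl fun l _ => ?_
  by_cases h : γ l.castSucc = i
  · subst h
    simp [hadj l]
  · simp [h]

lemma sum_inN_arcExtend (hadj : ∀ l : Fin (n + 1), Adj (γ l.castSucc) (γ l.succ))
    (f : Fin (n + 1) → β) (j : Fin m) :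
    ∑ i ∈ inN Adj j, arcExtend γ f i j = ∑ l, if γ l.succ = j then f l else 0 := by
  unfold arcExtend
  rw [sum_comm]
  refine sum_congr rfl fun l _ => ?_
  by_cases h : γ l.succ = j
  · subst h
    simp [hadj l]
  · simp [h]

lemma sum_outN_map₂_arcExtend (hγ : Injective γ)
    (hadj : ∀ l : Fin (n + 1), Adj (γ l.castSucc) (γ l.succ)) {β' M : Type*} [AddCommMonoid β']
    [AddCommMonoid M] (φ : β → β' → M) (hφ : φ 0 0 = 0) (f : Fin (n + 1) → β)
    (g : Fin (n + 1) → β') (k : Fin (n + 1)) :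
    ∑ j ∈ outN Adj (γ k.castSucc),
      φ (arcExtend γ f (γ k.castSucc) j) (arcExtend γ g (γ k.castSucc) j) = φ (f k) (g k) := by
  rw [sum_congr rfl fun j _ => arcExtend_map₂ hγ φ hφ f g _ j, sum_outN_arcExtend hadj,
    sum_ite_castSucc_eq hγ]

lemma sum_inN_map₂_arcExtend (hγ : Injective γ)
    (hadj : ∀ l : Fin (n + 1), Adj (γ l.castSucc) (γ l.succ)) {β' M : Type*} [AddCommMonoid β']
    [AddCommMonoid M] (φ : β → β' → M) (hφ : φ 0 0 = 0) (f : Fin (n + 1) → β)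
    (g : Fin (n + 1) → β') (k : Fin (n + 1)) :
    ∑ h ∈ inN Adj (γ k.succ),
      φ (arcExtend γ f h (γ k.succ)) (arcExtend γ g h (γ k.succ)) = φ (f k) (g k) := by
  rw [sum_congr rfl fun h _ => arcExtend_map₂ hγ φ hφ f g h _, sum_inN_arcExtend hadj,
    sum_ite_succ_eq hγ]

lemma sum_ite_castSucc_le_one (hγ : Injective γ) (i : Fin m) :
    ∑ l : Fin (n + 1), (if γ l.castSucc = i then (1 : ℝ) else 0) ≤ 1 := by
  by_cases h : ∃ k : Fin (n + 1), γ k.castSucc = i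
  · obtain ⟨k, rfl⟩ := h
    rw [sum_ite_castSucc_eq hγ (fun _ => (1 : ℝ))]
  · push Not at h
    simp [h]

lemma sum_ite_succ_le_one (hγ : Injective γ) (i : Fin m) :
    ∑ l : Fin (n + 1), (if γ l.succ = i then (1 : ℝ) else 0) ≤ 1 := by
  by_cases h : ∃ k : Fin (n + 1), γ k.succ = i
  · obtain ⟨k, rfl⟩ := h
    rw [sum_ite_succ_eq hγ (fun _ => (1 : ℝ))]
  · push Not at h
    simp [h]

lemma sum_ite_castSucc_sub_sum_ite_succ (i : Fin m) :
    ∑ l : Fin (n + 1), (if γ l.castSucc = i then (1 : ℝ) else 0)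
      - ∑ l : Fin (n + 1), (if γ l.succ = i then (1 : ℝ) else 0)
      = (if γ 0 = i then 1 else 0) - (if γ (Fin.last (n + 1)) = i then 1 else 0) := by
  have hc := Fin.sum_univ_castSucc fun k => if γ k = i then (1 : ℝ) else 0
  have hs := Fin.sum_univ_succ fun k => if γ k = i then (1 : ℝ) else 0
  linarith

end ArcExtend

section Formulation

variable {d m : ℕ}

structure IsF2Feasible (p : Fin m → ℝ≥0∞) (ExtF : Fin m → Fin m → Finset (Fin d → ℝ))
    (Adj : Fin m → Fin m → Prop) (s t : Fin m) (xs xt : Fin d → ℝ) (dv : Fin m → ℝ)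
    (z : Fin m → Fin m → ℝ) (lam : Fin m → Fin m → (Fin d → ℝ) → ℝ)
    (ρ : Fin m → Fin m → Fin m → ℝ) (Φ Ψ : Fin m → Fin m → Fin m → (Fin d → ℝ) → ℝ) : Prop where
  dv_nonneg : ∀ i, 0 ≤ dv i
  z_mem : ∀ i j, Adj i j → (z i j = 0 ∨ z i j = 1)
  lam_nonneg : ∀ i j, Adj i j → ∀ e ∈ ExtF i j, 0 ≤ lam i j e
  ρ_nonneg : ∀ i, i ≠ s → i ≠ t → ∀ h j, Adj h i → Adj i j → 0 ≤ ρ h i j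
  Φ_nonneg : ∀ i, i ≠ s → i ≠ t → ∀ h j, Adj h i → Adj i j → ∀ e ∈ ExtF h i, 0 ≤ Φ h i j e
  Ψ_nonneg : ∀ i, i ≠ s → i ≠ t → ∀ h j, Adj h i → Adj i j → ∀ e ∈ ExtF i j, 0 ≤ Ψ h i j e
  flow_source : (∑ j ∈ outN Adj s, z s j) - (∑ h ∈ inN Adj s, z h s) = 1
  flow_interior : ∀ i, i ≠ s → i ≠ t →
    (∑ j ∈ outN Adj i, z i j) - (∑ h ∈ inN Adj i, z h i) = 0
  flow_target : (∑ j ∈ outN Adj t, z t j) - (∑ h ∈ inN Adj t, z h t) = -1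
  inflow_le_one : ∀ i, (∑ h ∈ inN Adj i, z h i) ≤ 1
  outflow_le_one : ∀ i, (∑ j ∈ outN Adj i, z i j) ≤ 1
  dv_source : (∑ j ∈ outN Adj s,
    lpnorm (p s) ((∑ e ∈ ExtF s j, lam s j e • e) - z s j • xs)) ≤ dv s
  dv_interior : ∀ i, i ≠ s → i ≠ t →
    (∑ h ∈ inN Adj i, ∑ j ∈ outN Adj i,
      lpnorm (p i) ((∑ e ∈ ExtF i j, Ψ h i j e • e) - (∑ e ∈ ExtF h i, Φ h i j e • e))) ≤ dv i
  dv_target : (∑ h ∈ inN Adj t,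
    lpnorm (p t) (z h t • xt - (∑ e ∈ ExtF h t, lam h t e • e))) ≤ dv t
  sum_lam : ∀ i j, Adj i j → (∑ e ∈ ExtF i j, lam i j e) = z i j
  sum_ρ_out : ∀ i, i ≠ s → i ≠ t → ∀ h, Adj h i → (∑ j ∈ outN Adj i, ρ h i j) = z h i
  sum_ρ_in : ∀ i, i ≠ s → i ≠ t → ∀ j, Adj i j → (∑ h ∈ inN Adj i, ρ h i j) = z i j
  sum_Φ : ∀ i, i ≠ s → i ≠ t → ∀ h j, Adj h i → Adj i j →
    (∑ e ∈ ExtF h i, Φ h i j e) = ρ h i j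
  sum_Φ_out : ∀ i, i ≠ s → i ≠ t → ∀ h, Adj h i → ∀ e ∈ ExtF h i,
    (∑ j ∈ outN Adj i, Φ h i j e) = lam h i e
  sum_Ψ : ∀ i, i ≠ s → i ≠ t → ∀ h j, Adj h i → Adj i j →
    (∑ e ∈ ExtF i j, Ψ h i j e) = ρ h i j
  sum_Ψ_in : ∀ i, i ≠ s → i ≠ t → ∀ j, Adj i j → ∀ e ∈ ExtF i j,
    (∑ h ∈ inN Adj i, Ψ h i j e) = lam i j e

/-- The objective of (SPP) for the path `γ` with gate points `y l ∈ F_{γ l, γ (l + 1)}`. -/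
noncomputable def pathCost (p : Fin m → ℝ≥0∞) (ω : Fin m → ℝ) (s t : Fin m) (xs xt : Fin d → ℝ)
    {n : ℕ} (γ : Fin (n + 2) → Fin m) (y : Fin (n + 1) → Fin d → ℝ) : ℝ :=
  ω s * lpnorm (p s) (y 0 - xs)
    + (∑ l : Fin n, ω (γ l.succ.castSucc) *
        lpnorm (p (γ l.succ.castSucc)) (y l.succ - y l.castSucc))
    + ω t * lpnorm (p t) (xt - y (Fin.last n))

lemma Fin.sum_univ_eq_first_add_sum_add_last {M : Type*} [AddCommMonoid M] {n : ℕ}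
    (f : Fin (n + 2) → M) :
    ∑ k, f k = f 0 + ∑ l : Fin n, f l.succ.castSucc + f (Fin.last (n + 1)) := by
  rw [Fin.sum_univ_succ, Fin.sum_univ_castSucc]
  simp only [Fin.succ_castSucc, Fin.succ_last, add_assoc]

lemma Function.Injective.apply_succ_castSucc_ne_apply_zero {α : Type*} {n : ℕ} {γ : Fin (n + 2) → α}
    (hγ : Injective γ) (l : Fin n) : γ l.succ.castSucc ≠ γ 0 := fun h =>
  Fin.succ_ne_zero l (Fin.castSucc_eq_zero_iff.1 (hγ h))

lemma Function.Injective.apply_succ_castSucc_ne_apply_last {α : Type*} {n : ℕ} {γ : Fin (n + 2) → α}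
    (hγ : Injective γ) (l : Fin n) : γ l.succ.castSucc ≠ γ (Fin.last (n + 1)) := fun h =>
  (Fin.castSucc_lt_last _).ne (hγ h)

variable {p : Fin m → ℝ≥0∞} {ω : Fin m → ℝ} {s t : Fin m} {xs xt : Fin d → ℝ} {n : ℕ}
  {γ : Fin (n + 2) → Fin m} {y : Fin (n + 1) → Fin d → ℝ} {dv : Fin m → ℝ}

lemma pathCost_le_sum (hω : ∀ i, 0 ≤ ω i) (hdv : ∀ i, 0 ≤ dv i) (hγ : Injective γ)
    (h0 : γ 0 = s) (hT : γ (Fin.last (n + 1)) = t)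
    (hs : lpnorm (p s) (y 0 - xs) ≤ dv s)
    (hi : ∀ l : Fin n, lpnorm (p (γ l.succ.castSucc)) (y l.succ - y l.castSucc)
      ≤ dv (γ l.succ.castSucc))
    (ht : lpnorm (p t) (xt - y (Fin.last n)) ≤ dv t) :
    pathCost p ω s t xs xt γ y ≤ ∑ i, ω i * dv i := calc
  pathCost p ω s t xs xt γ y ≤ ∑ k, ω (γ k) * dv (γ k) := by
    rw [Fin.sum_univ_eq_first_add_sum_add_last, h0, hT, pathCost]
    gcongr with l
    all_goals first | exact hω _ | exact hi l
  _ ≤ ∑ i, ω i * dv i := by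
    rw [← sum_image (g := γ) (f := fun i => ω i * dv i) fun a _ b _ h => hγ h]
    exact sum_le_sum_of_subset_of_nonneg (subset_univ _)
      fun i _ _ => mul_nonneg (hω i) (hdv i)

lemma pathCost_eq_sum (hγ : Injective γ) (h0 : γ 0 = s) (hT : γ (Fin.last (n + 1)) = t)
    (hs : dv s = lpnorm (p s) (y 0 - xs))
    (hi : ∀ l : Fin n,
      dv (γ l.succ.castSucc) = lpnorm (p (γ l.succ.castSucc)) (y l.succ - y l.castSucc))
    (ht : dv t = lpnorm (p t) (xt - y (Fin.last n))) (hoff : ∀ i ∉ Set.range γ, dv i = 0) :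
    pathCost p ω s t xs xt γ y = ∑ i, ω i * dv i := by
  rw [← Fintype.sum_of_injective γ hγ (fun k => ω (γ k) * dv (γ k)) _
    (fun i hi => by simp [hoff i hi]) fun _ => rfl,
    Fin.sum_univ_eq_first_add_sum_add_last, h0, hT, hs, ht, pathCost]
  simp only [hi]

end Formulation

section PathFlow

variable {d m n : ℕ} {Adj : Fin m → Fin m → Prop} {γ : Fin (n + 2) → Fin m}

lemma arcExtend_one_mem (hγ : Injective γ) (i j : Fin m) :
    arcExtend γ (fun _ => (1 : ℝ)) i j = 0 ∨ arcExtend γ (fun _ => (1 : ℝ)) i j = 1 :=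
  arcExtend_induction hγ (Q := fun _ _ (v : ℝ) => v = 0 ∨ v = 1) _ (fun _ => Or.inr rfl)
    (fun _ _ _ => Or.inl rfl) i j

variable (hadj : ∀ l : Fin (n + 1), Adj (γ l.castSucc) (γ l.succ))
include hadj

lemma sum_outN_arcExtend_one_sub_sum_inN (i : Fin m) :
    (∑ j ∈ outN Adj i, arcExtend γ (fun _ => (1 : ℝ)) i j)
      - (∑ h ∈ inN Adj i, arcExtend γ (fun _ => (1 : ℝ)) h i)
      = (if γ 0 = i then 1 else 0) - (if γ (Fin.last (n + 1)) = i then 1 else 0) := by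
  rw [sum_outN_arcExtend hadj, sum_inN_arcExtend hadj]
  exact sum_ite_castSucc_sub_sum_ite_succ i

lemma sum_outN_arcExtend_one_le_one (hγ : Injective γ) (i : Fin m) :
    ∑ j ∈ outN Adj i, arcExtend γ (fun _ => (1 : ℝ)) i j ≤ 1 := by
  rw [sum_outN_arcExtend hadj]
  exact sum_ite_castSucc_le_one hγ i

lemma sum_inN_arcExtend_one_le_one (hγ : Injective γ) (i : Fin m) :
    ∑ h ∈ inN Adj i, arcExtend γ (fun _ => (1 : ℝ)) h i ≤ 1 := by
  rw [sum_inN_arcExtend hadj]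
  exact sum_ite_succ_le_one hγ i

end PathFlow

section ConvexWeights

variable {d m n : ℕ} {γ : Fin (n + 2) → Fin m} {ExtF : Fin m → Fin m → Finset (Fin d → ℝ)}
  {W : Fin (n + 1) → (Fin d → ℝ) → ℝ} (hγ : Injective γ)
include hγ

lemma arcExtend_weights_nonneg (hW : ∀ l, ∀ e ∈ ExtF (γ l.castSucc) (γ l.succ), 0 ≤ W l e)
    (i j : Fin m) : ∀ e ∈ ExtF i j, 0 ≤ arcExtend γ W i j e :=
  arcExtend_induction hγ (Q := fun i j v => ∀ e ∈ ExtF i j, 0 ≤ v e) W hW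
    (fun _ _ _ _ _ => le_rfl) i j

lemma sum_arcExtend_weights (hW : ∀ l, ∑ e ∈ ExtF (γ l.castSucc) (γ l.succ), W l e = 1)
    (i j : Fin m) : ∑ e ∈ ExtF i j, arcExtend γ W i j e = arcExtend γ (fun _ => 1) i j :=
  arcExtend_induction hγ (Q := fun i j v => ∑ e ∈ ExtF i j, v e = arcExtend γ (fun _ => 1) i j)
    W (fun l => by simp [hW l, arcExtend_arc hγ]) (fun i j h => by simp [arcExtend_of_not_arc h])
    i j

lemma sum_arcExtend_weights_smul {y : Fin (n + 1) → Fin d → ℝ}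
    (hW : ∀ l, ∑ e ∈ ExtF (γ l.castSucc) (γ l.succ), W l e • e = y l) (i j : Fin m) :
    ∑ e ∈ ExtF i j, arcExtend γ W i j e • e = arcExtend γ y i j :=
  arcExtend_induction hγ (Q := fun i j v => ∑ e ∈ ExtF i j, v e • e = arcExtend γ y i j)
    W (fun l => by simp [hW l, arcExtend_arc hγ]) (fun i j h => by simp [arcExtend_of_not_arc h])
    i j

end ConvexWeights

section Forward

variable {d m n : ℕ} {p : Fin m → ℝ≥0∞} {Adj : Fin m → Fin m → Prop} {s t : Fin m}
  {xs xt : Fin d → ℝ} {γ : Fin (n + 2) → Fin m}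

/-- The smallest values of the variables `d_i` of (SPP-F2) for a flow `z` with gate points
`G i j = ∑ e, λ_{ije} e`, when `ρ`, `Φ` and `Ψ` are the products of `z` and `λ`. -/
noncomputable def vertexLength (p : Fin m → ℝ≥0∞) (Adj : Fin m → Fin m → Prop) (s t : Fin m)
    (xs xt : Fin d → ℝ) (z : Fin m → Fin m → ℝ) (G : Fin m → Fin m → Fin d → ℝ) (i : Fin m) : ℝ :=
  if i = s then ∑ j ∈ outN Adj s, lpnorm (p s) (G s j - z s j • xs)
  else if i = t then ∑ h ∈ inN Adj t, lpnorm (p t) (z h t • xt - G h t)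
  else ∑ h ∈ inN Adj i, ∑ j ∈ outN Adj i, lpnorm (p i) (z h i • G i j - z i j • G h i)

lemma vertexLength_nonneg (z : Fin m → Fin m → ℝ) (G : Fin m → Fin m → Fin d → ℝ) (i : Fin m) :
    0 ≤ vertexLength p Adj s t xs xt z G i := by
  unfold vertexLength
  split_ifs
  · exact sum_nonneg fun _ _ => lpnorm_nonneg _ _
  · exact sum_nonneg fun _ _ => lpnorm_nonneg _ _
  · exact sum_nonneg fun _ _ => sum_nonneg fun _ _ => lpnorm_nonneg _ _

lemma sum_inN_sum_outN_lpnorm_arcExtend (hγ : Injective γ)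
    (hadj : ∀ l : Fin (n + 1), Adj (γ l.castSucc) (γ l.succ)) {q : ℝ≥0∞} (hq : q ≠ 0)
    (y : Fin (n + 1) → Fin d → ℝ) (l : Fin n) :
    ∑ h ∈ inN Adj (γ l.succ.castSucc), ∑ j ∈ outN Adj (γ l.succ.castSucc),
      lpnorm q (arcExtend γ (fun _ => (1 : ℝ)) h (γ l.succ.castSucc) •
          arcExtend γ y (γ l.succ.castSucc) j
        - arcExtend γ (fun _ => (1 : ℝ)) (γ l.succ.castSucc) j •
          arcExtend γ y h (γ l.succ.castSucc))
      = lpnorm q (y l.succ - y l.castSucc) := by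
  rw [sum_comm]
  have hin := fun j => sum_inN_map₂_arcExtend hγ hadj
    (fun (a : ℝ) b => lpnorm q (a • arcExtend γ y (γ l.succ.castSucc) j
      - arcExtend γ (fun _ => (1 : ℝ)) (γ l.succ.castSucc) j • b))
    (by simp [lpnorm_zero hq]) (fun _ => 1) y l.castSucc
  simp only [Fin.succ_castSucc, one_smul] at hin
  simp only [hin]
  have hout := sum_outN_map₂_arcExtend hγ hadj (fun a (b : ℝ) => lpnorm q (a - b • y l.castSucc))
    (by simp [lpnorm_zero hq]) y (fun _ => 1) l.succ
  simpa only [one_smul] using hout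

lemma pathCost_eq_sum_vertexLength (ω : Fin m → ℝ) (hp : ∀ i, p i ≠ 0) (hst : s ≠ t)
    (hγ : Injective γ) (h0 : γ 0 = s) (hT : γ (Fin.last (n + 1)) = t)
    (hadj : ∀ l : Fin (n + 1), Adj (γ l.castSucc) (γ l.succ)) (y : Fin (n + 1) → Fin d → ℝ) :
    pathCost p ω s t xs xt γ y = ∑ i, ω i *
      vertexLength p Adj s t xs xt (arcExtend γ fun _ => 1) (arcExtend γ y) i := by
  refine pathCost_eq_sum hγ h0 hT ?_ (fun l => ?_) ?_ fun i hi => ?_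
  · have := sum_outN_map₂_arcExtend hγ hadj (fun a (b : ℝ) => lpnorm (p s) (a - b • xs))
      (by simp [lpnorm_zero (hp s)]) y (fun _ => 1) 0
    rw [Fin.castSucc_zero, h0, one_smul] at this
    simpa only [vertexLength, ↓reduceIte] using this
  · simp only [vertexLength, ← h0, ← hT, if_neg (hγ.apply_succ_castSucc_ne_apply_zero l),
      if_neg (hγ.apply_succ_castSucc_ne_apply_last l)]
    exact sum_inN_sum_outN_lpnorm_arcExtend hγ hadj (hp _) y l
  · have := sum_inN_map₂_arcExtend hγ hadj (fun (a : ℝ) b => lpnorm (p t) (a • xt - b))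
      (by simp [lpnorm_zero (hp t)]) (fun _ => 1) y (Fin.last n)
    rw [Fin.succ_last, hT, one_smul] at this
    simpa only [vertexLength, if_neg hst.symm, ↓reduceIte] using this
  · have hs : i ≠ s := fun h => hi ⟨0, h0.trans h.symm⟩
    have ht : i ≠ t := fun h => hi ⟨_, hT.trans h.symm⟩
    have hno : ∀ h, ∀ l : Fin (n + 1), γ l.castSucc = h → γ l.succ ≠ i :=
      fun _ l _ h' => hi ⟨_, h'⟩
    simp only [vertexLength, if_neg hs, if_neg ht]
    refine sum_eq_zero fun h _ => sum_eq_zero fun j _ => ?_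
    simp [arcExtend_of_not_arc (hno h), lpnorm_zero (hp i)]

lemma mul_sum_outN_eq_self {z : Fin m → Fin m → ℝ} {h i : Fin m}
    (hz : ∀ h', Adj h' i → z h' i = 0 ∨ z h' i = 1) (hin : ∑ h' ∈ inN Adj i, z h' i ≤ 1)
    (hflow : (∑ j ∈ outN Adj i, z i j) - (∑ h' ∈ inN Adj i, z h' i) = 0) (hh : Adj h i)
    {a : ℝ} (ha : z h i = 0 → a = 0) : a * ∑ j ∈ outN Adj i, z i j = a := by
  rcases hz h hh with h0 | h1
  · simp [ha h0]
  · have := one_le_sum_of_eq_one (fun h' hh' => hz h' (mem_inN.1 hh')) (mem_inN.2 hh) h1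
    rw [show ∑ j ∈ outN Adj i, z i j = 1 by linarith, mul_one]

lemma sum_inN_mul_eq_self {z : Fin m → Fin m → ℝ} {i j : Fin m}
    (hz : ∀ j', Adj i j' → z i j' = 0 ∨ z i j' = 1) (hout : ∑ j' ∈ outN Adj i, z i j' ≤ 1)
    (hflow : (∑ j' ∈ outN Adj i, z i j') - (∑ h ∈ inN Adj i, z h i) = 0) (hj : Adj i j)
    {a : ℝ} (ha : z i j = 0 → a = 0) : (∑ h ∈ inN Adj i, z h i) * a = a := by
  rcases hz j hj with h0 | h1
  · simp [ha h0]
  · have := one_le_sum_of_eq_one (fun j' hj' => hz j' (mem_outN.1 hj')) (mem_outN.2 hj) h1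
    rw [show ∑ h ∈ inN Adj i, z h i = 1 by linarith, one_mul]

lemma exists_isF2Feasible_of_path (ω : Fin m → ℝ) {ExtF : Fin m → Fin m → Finset (Fin d → ℝ)}
    (hp : ∀ i, 1 ≤ p i) (hst : s ≠ t) {y : Fin (n + 1) → Fin d → ℝ} (hγ : Injective γ)
    (h0 : γ 0 = s) (hT : γ (Fin.last (n + 1)) = t)
    (hadj : ∀ l : Fin (n + 1), Adj (γ l.castSucc) (γ l.succ))
    (hy : ∀ l, y l ∈ convexHull ℝ (ExtF (γ l.castSucc) (γ l.succ) : Set (Fin d → ℝ))) :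
    ∃ dv z lam ρ Φ Ψ, IsF2Feasible p ExtF Adj s t xs xt dv z lam ρ Φ Ψ ∧
      pathCost p ω s t xs xt γ y = ∑ i, ω i * dv i := by
  choose W hW0 hW1 hWy using fun l => Finset.mem_convexHull'.1 (hy l)
  set z : Fin m → Fin m → ℝ := arcExtend γ fun _ => 1
  set lam := arcExtend γ W
  have hz01 : ∀ i j, z i j = 0 ∨ z i j = 1 := arcExtend_one_mem hγ
  have hz0 : ∀ i j, 0 ≤ z i j := fun i j => by rcases hz01 i j with h | h <;> simp [h]
  have hlam0 : ∀ i j, ∀ e ∈ ExtF i j, 0 ≤ lam i j e := arcExtend_weights_nonneg hγ hW0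
  have hlam : ∀ i j, ∑ e ∈ ExtF i j, lam i j e = z i j := sum_arcExtend_weights hγ hW1
  have hlam_zero : ∀ i j, z i j = 0 → ∀ e ∈ ExtF i j, lam i j e = 0 := fun i j h =>
    (sum_eq_zero_iff_of_nonneg (hlam0 i j)).1 ((hlam i j).trans h)
  have hgate : ∀ i j, ∑ e ∈ ExtF i j, lam i j e • e = arcExtend γ y i j :=
    sum_arcExtend_weights_smul hγ hWy
  have hsmul : ∀ (a : ℝ) i j, ∑ e ∈ ExtF i j, (a * lam i j e) • e = a • arcExtend γ y i j := by
    intro a i j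
    simp only [mul_smul, ← smul_sum, hgate]
  have hflow : ∀ i, (∑ j ∈ outN Adj i, z i j) - (∑ h ∈ inN Adj i, z h i)
      = (if γ 0 = i then 1 else 0) - (if γ (Fin.last (n + 1)) = i then 1 else 0) :=
    sum_outN_arcExtend_one_sub_sum_inN hadj
  have hflow_int : ∀ i, i ≠ s → i ≠ t →
      (∑ j ∈ outN Adj i, z i j) - (∑ h ∈ inN Adj i, z h i) = 0 := fun i hs ht => by
    rw [hflow, h0, hT, if_neg hs.symm, if_neg ht.symm, sub_zero]
  have hin1 : ∀ i, ∑ h ∈ inN Adj i, z h i ≤ 1 := sum_inN_arcExtend_one_le_one hadj hγ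
  have hout1 : ∀ i, ∑ j ∈ outN Adj i, z i j ≤ 1 := sum_outN_arcExtend_one_le_one hadj hγ
  refine ⟨vertexLength p Adj s t xs xt z (arcExtend γ y), z, lam, fun h i j => z h i * z i j,
    fun h i j e => lam h i e * z i j, fun h i j e => z h i * lam i j e,
    { dv_nonneg := vertexLength_nonneg z _
      z_mem := fun i j _ => hz01 i j
      lam_nonneg := fun i j _ => hlam0 i j
      ρ_nonneg := fun i _ _ h j _ _ => mul_nonneg (hz0 h i) (hz0 i j)
      Φ_nonneg := fun i _ _ h j _ _ e he => mul_nonneg (hlam0 h i e he) (hz0 i j)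
      Ψ_nonneg := fun i _ _ h j _ _ e he => mul_nonneg (hz0 h i) (hlam0 i j e he)
      flow_source := by rw [hflow, h0, hT, if_pos rfl, if_neg hst.symm, sub_zero]
      flow_interior := hflow_int
      flow_target := by rw [hflow, h0, hT, if_pos rfl, if_neg hst, zero_sub]
      inflow_le_one := hin1
      outflow_le_one := hout1
      dv_source := by simp only [hgate, vertexLength, ↓reduceIte, le_refl]
      dv_interior := fun i hs ht => by
        simp only [mul_comm (lam _ _ _), hsmul, vertexLength, if_neg hs, if_neg ht, le_refl]
      dv_target := by simp only [hgate, vertexLength, if_neg hst.symm, ↓reduceIte, le_refl]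
      sum_lam := fun i j _ => hlam i j
      sum_ρ_out := fun i hs ht h hh => by
        rw [← mul_sum]
        exact mul_sum_outN_eq_self (fun h' _ => hz01 h' i) (hin1 i) (hflow_int i hs ht) hh id
      sum_ρ_in := fun i hs ht j hj => by
        rw [← sum_mul]
        exact sum_inN_mul_eq_self (fun j' _ => hz01 i j') (hout1 i) (hflow_int i hs ht) hj id
      sum_Φ := fun i _ _ h j _ _ => by rw [← sum_mul, hlam]
      sum_Φ_out := fun i hs ht h hh e he => by
        rw [← mul_sum]
        exact mul_sum_outN_eq_self (fun h' _ => hz01 h' i) (hin1 i) (hflow_int i hs ht) hh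
          fun hz => hlam_zero h i hz e he
      sum_Ψ := fun i _ _ h j _ _ => by rw [← mul_sum, hlam]
      sum_Ψ_in := fun i hs ht j hj e he => by
        rw [← sum_mul]
        exact sum_inN_mul_eq_self (fun j' _ => hz01 i j') (hout1 i) (hflow_int i hs ht) hj
          fun hz => hlam_zero i j hz e he },
    pathCost_eq_sum_vertexLength ω (fun i => (zero_lt_one.trans_le (hp i)).ne') hst hγ h0 hT
      hadj y⟩

end Forward

namespace IsF2Feasible

variable {d m : ℕ} {p : Fin m → ℝ≥0∞} {ExtF : Fin m → Fin m → Finset (Fin d → ℝ)}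
  {Adj : Fin m → Fin m → Prop} {s t : Fin m} {xs xt : Fin d → ℝ} {dv : Fin m → ℝ}
  {z : Fin m → Fin m → ℝ} {lam : Fin m → Fin m → (Fin d → ℝ) → ℝ}
  {ρ : Fin m → Fin m → Fin m → ℝ} {Φ Ψ : Fin m → Fin m → Fin m → (Fin d → ℝ) → ℝ}
  (hF : IsF2Feasible p ExtF Adj s t xs xt dv z lam ρ Φ Ψ)
include hF

lemma z_mem_outN (i : Fin m) : ∀ j ∈ outN Adj i, z i j = 0 ∨ z i j = 1 :=
  fun j hj => hF.z_mem i j (mem_outN.1 hj)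

lemma z_mem_inN (i : Fin m) : ∀ h ∈ inN Adj i, z h i = 0 ∨ z h i = 1 :=
  fun h hh => hF.z_mem h i (mem_inN.1 hh)

lemma exists_simpleWalk (hst : s ≠ t) :
    ∃ (n : ℕ) (γ : Fin (n + 2) → Fin m), IsSimpleWalk (fun i j => Adj i j ∧ z i j = 1) γ ∧
      γ 0 = s ∧ γ (Fin.last (n + 1)) = t := by
  have hin_s : 0 ≤ ∑ h ∈ inN Adj s, z h s :=
    sum_nonneg fun h hh => by rcases hF.z_mem_inN s h hh with h' | h' <;> simp [h']
  refine exists_simpleWalk_to ?_ ?_ ?_ ?_ hst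
  · rintro h ⟨hh, h1⟩
    have := one_le_sum_of_eq_one (hF.z_mem_inN s) (mem_inN.2 hh) h1
    linarith [hF.outflow_le_one s, hF.flow_source]
  · obtain ⟨j, hj, h1⟩ := exists_eq_one_of_one_le_sum (hF.z_mem_outN s)
      (by linarith [hF.flow_source])
    exact ⟨j, mem_outN.1 hj, h1⟩
  · rintro h h' i ⟨hh, h1⟩ ⟨hh', h1'⟩
    by_contra hne
    have := eq_zero_of_sum_le_one (hF.z_mem_inN i) (hF.inflow_le_one i) (mem_inN.2 hh)
      (mem_inN.2 hh') h1' hne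
    linarith
  · rintro i hs ht ⟨h, hh, h1⟩
    have := one_le_sum_of_eq_one (hF.z_mem_inN i) (mem_inN.2 hh) h1
    obtain ⟨j, hj, h1⟩ := exists_eq_one_of_one_le_sum (hF.z_mem_outN i)
      (by linarith [hF.flow_interior i hs ht])
    exact ⟨j, mem_outN.1 hj, h1⟩

lemma gate_mem_convexHull {i j : Fin m} (hij : Adj i j) (hz : z i j = 1) :
    ∑ e ∈ ExtF i j, lam i j e • e ∈ convexHull ℝ (ExtF i j : Set (Fin d → ℝ)) :=
  Finset.mem_convexHull'.2 ⟨lam i j, hF.lam_nonneg i j hij, (hF.sum_lam i j hij).trans hz, rfl⟩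

lemma gate_eq_zero {i j : Fin m} (hij : Adj i j) (hz : z i j = 0) :
    ∑ e ∈ ExtF i j, lam i j e • e = 0 := by
  have := (sum_eq_zero_iff_of_nonneg (hF.lam_nonneg i j hij)).1 ((hF.sum_lam i j hij).trans hz)
  exact sum_eq_zero fun e he => by rw [this e he, zero_smul]

lemma sum_outN_gate {i j : Fin m} (hij : Adj i j) (hz : z i j = 1) :
    ∑ j' ∈ outN Adj i, ∑ e ∈ ExtF i j', lam i j' e • e = ∑ e ∈ ExtF i j, lam i j e • e :=
  sum_eq_single_of_mem j (mem_outN.2 hij) fun _ hj' hne => hF.gate_eq_zero (mem_outN.1 hj')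
    (eq_zero_of_sum_le_one (hF.z_mem_outN i) (hF.outflow_le_one i) hj' (mem_outN.2 hij) hz hne)

lemma sum_inN_gate {h i : Fin m} (hhi : Adj h i) (hz : z h i = 1) :
    ∑ h' ∈ inN Adj i, ∑ e ∈ ExtF h' i, lam h' i e • e = ∑ e ∈ ExtF h i, lam h i e • e :=
  sum_eq_single_of_mem h (mem_inN.2 hhi) fun _ hh' hne => hF.gate_eq_zero (mem_inN.1 hh')
    (eq_zero_of_sum_le_one (hF.z_mem_inN i) (hF.inflow_le_one i) hh' (mem_inN.2 hhi) hz hne)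

lemma sum_inN_sum_outN_Ψ_sub_Φ {i : Fin m} (hs : i ≠ s) (ht : i ≠ t) :
    ∑ h ∈ inN Adj i, ∑ j ∈ outN Adj i,
      ((∑ e ∈ ExtF i j, Ψ h i j e • e) - ∑ e ∈ ExtF h i, Φ h i j e • e)
      = ∑ j ∈ outN Adj i, ∑ e ∈ ExtF i j, lam i j e • e
        - ∑ h ∈ inN Adj i, ∑ e ∈ ExtF h i, lam h i e • e := by
  simp only [sum_sub_distrib]
  congr 1
  · rw [sum_comm]
    refine sum_congr rfl fun j hj => ?_
    rw [sum_comm]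
    refine sum_congr rfl fun e he => ?_
    rw [← sum_smul, hF.sum_Ψ_in i hs ht j (mem_outN.1 hj) e he]
  · refine sum_congr rfl fun h hh => ?_
    rw [sum_comm]
    refine sum_congr rfl fun e he => ?_
    rw [← sum_smul, hF.sum_Φ_out i hs ht h (mem_inN.1 hh) e he]

lemma lpnorm_source_le {j : Fin m} (hj : Adj s j) (hz : z s j = 1) :
    lpnorm (p s) (∑ e ∈ ExtF s j, lam s j e • e - xs) ≤ dv s := calc
  _ = lpnorm (p s) (∑ e ∈ ExtF s j, lam s j e • e - z s j • xs) := by rw [hz, one_smul]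
  _ ≤ ∑ j ∈ outN Adj s, lpnorm (p s) (∑ e ∈ ExtF s j, lam s j e • e - z s j • xs) :=
    single_le_sum (f := fun j => lpnorm (p s) (∑ e ∈ ExtF s j, lam s j e • e - z s j • xs))
      (fun _ _ => lpnorm_nonneg _ _) (mem_outN.2 hj)
  _ ≤ dv s := hF.dv_source

lemma lpnorm_target_le {h : Fin m} (hh : Adj h t) (hz : z h t = 1) :
    lpnorm (p t) (xt - ∑ e ∈ ExtF h t, lam h t e • e) ≤ dv t := calc
  _ = lpnorm (p t) (z h t • xt - ∑ e ∈ ExtF h t, lam h t e • e) := by rw [hz, one_smul]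
  _ ≤ ∑ h ∈ inN Adj t, lpnorm (p t) (z h t • xt - ∑ e ∈ ExtF h t, lam h t e • e) :=
    single_le_sum (f := fun h => lpnorm (p t) (z h t • xt - ∑ e ∈ ExtF h t, lam h t e • e))
      (fun _ _ => lpnorm_nonneg _ _) (mem_inN.2 hh)
  _ ≤ dv t := hF.dv_target

lemma lpnorm_interior_le {h i j : Fin m} (hp : 1 ≤ p i) (hs : i ≠ s) (ht : i ≠ t)
    (hh : Adj h i) (hzh : z h i = 1) (hj : Adj i j) (hzj : z i j = 1) :
    lpnorm (p i) (∑ e ∈ ExtF i j, lam i j e • e - ∑ e ∈ ExtF h i, lam h i e • e) ≤ dv i := calc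
  _ = lpnorm (p i) (∑ h ∈ inN Adj i, ∑ j ∈ outN Adj i,
        ((∑ e ∈ ExtF i j, Ψ h i j e • e) - ∑ e ∈ ExtF h i, Φ h i j e • e)) := by
    rw [hF.sum_inN_sum_outN_Ψ_sub_Φ hs ht, hF.sum_outN_gate hj hzj, hF.sum_inN_gate hh hzh]
  _ ≤ ∑ h ∈ inN Adj i, lpnorm (p i) (∑ j ∈ outN Adj i,
        ((∑ e ∈ ExtF i j, Ψ h i j e • e) - ∑ e ∈ ExtF h i, Φ h i j e • e)) :=
    lpnorm_sum_le hp _ _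
  _ ≤ _ := sum_le_sum fun _ _ => lpnorm_sum_le hp _ _
  _ ≤ dv i := hF.dv_interior i hs ht

lemma exists_path_cost_le {P : Fin m → Set (Fin d → ℝ)} (ω : Fin m → ℝ)
    (hFpoly : ∀ i j, i ≠ j → P i ∩ P j = convexHull ℝ (ExtF i j : Set (Fin d → ℝ)))
    (hp : ∀ i, 1 ≤ p i) (hω : ∀ i, 0 ≤ ω i) (hAdj : ∀ i j, Adj i j → i ≠ j) (hst : s ≠ t) :
    ∃ (n : ℕ) (γ : Fin (n + 2) → Fin m) (y : Fin (n + 1) → Fin d → ℝ),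
      γ 0 = s ∧ γ (Fin.last (n + 1)) = t ∧ Injective γ ∧
      (∀ l : Fin (n + 1), Adj (γ l.castSucc) (γ l.succ)) ∧
      (∀ l : Fin (n + 1), y l ∈ P (γ l.castSucc) ∩ P (γ l.succ)) ∧
      pathCost p ω s t xs xt γ y ≤ ∑ i, ω i * dv i := by
  obtain ⟨n, γ, ⟨hγ, harc⟩, h0, hT⟩ := hF.exists_simpleWalk hst
  refine ⟨n, γ, fun l => ∑ e ∈ ExtF (γ l.castSucc) (γ l.succ), lam (γ l.castSucc) (γ l.succ) e • e,
    h0, hT, hγ,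
    fun l => (harc l).1, fun l => ?_, ?_⟩
  · rw [hFpoly _ _ (hAdj _ _ (harc l).1)]
    exact hF.gate_mem_convexHull (harc l).1 (harc l).2
  refine pathCost_le_sum hω hF.dv_nonneg hγ h0 hT ?_ (fun l => ?_) ?_
  · have h := harc 0
    rw [Fin.castSucc_zero, h0] at h ⊢
    exact hF.lpnorm_source_le h.1 h.2
  · have hin := harc l.castSucc
    rw [Fin.succ_castSucc] at hin ⊢
    exact hF.lpnorm_interior_le (hp _) (h0 ▸ hγ.apply_succ_castSucc_ne_apply_zero l)
      (hT ▸ hγ.apply_succ_castSucc_ne_apply_last l) hin.1 hin.2 (harc l.succ).1 (harc l.succ).2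
  · have h := harc (Fin.last n)
    rw [Fin.succ_last, hT] at h ⊢
    exact hF.lpnorm_target_le h.1 h.2

end IsF2Feasible

theorem stmt_11_general {d m : ℕ}
    (P : Fin m → Set (Fin d → ℝ))
    (p : Fin m → ℝ≥0∞) (hp : ∀ i, 1 ≤ p i)
    (ω : Fin m → ℝ) (hω : ∀ i, 0 < ω i)
    (ExtF : Fin m → Fin m → Finset (Fin d → ℝ))
    (hFpoly : ∀ i j, i ≠ j → P i ∩ P j = convexHull ℝ (ExtF i j : Set (Fin d → ℝ)))
    (Adj : Fin m → Fin m → Prop)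
    (hAdj : ∀ i j, Adj i j ↔ i ≠ j ∧ (P i ∩ P j).Nonempty)
    (s t : Fin m) (hst : s ≠ t)
    (xs xt : Fin d → ℝ) :
    sInf {r : ℝ | ∃ (n : ℕ) (γ : Fin (n + 2) → Fin m) (y : Fin (n + 1) → (Fin d → ℝ)),
        γ 0 = s ∧ γ (Fin.last (n + 1)) = t ∧ Function.Injective γ ∧
        (∀ l : Fin (n + 1), Adj (γ l.castSucc) (γ l.succ)) ∧
        (∀ l : Fin (n + 1), y l ∈ P (γ l.castSucc) ∩ P (γ l.succ)) ∧
        r = ω s * lpnorm (p s) (y 0 - xs)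
            + (∑ l : Fin n, ω (γ l.succ.castSucc) *
                lpnorm (p (γ l.succ.castSucc)) (y l.succ - y l.castSucc))
            + ω t * lpnorm (p t) (xt - y (Fin.last n))}
    = sInf {r : ℝ | ∃ (dv : Fin m → ℝ) (z : Fin m → Fin m → ℝ)
        (lam : Fin m → Fin m → (Fin d → ℝ) → ℝ)
        (ρ : Fin m → Fin m → Fin m → ℝ)
        (Φ : Fin m → Fin m → Fin m → (Fin d → ℝ) → ℝ)
        (Ψ : Fin m → Fin m → Fin m → (Fin d → ℝ) → ℝ),
        (∀ i, 0 ≤ dv i) ∧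
        (∀ i j, Adj i j → (z i j = 0 ∨ z i j = 1)) ∧
        (∀ i j, Adj i j → ∀ e ∈ ExtF i j, 0 ≤ lam i j e) ∧
        (∀ i, i ≠ s → i ≠ t → ∀ h j, Adj h i → Adj i j → 0 ≤ ρ h i j) ∧
        (∀ i, i ≠ s → i ≠ t → ∀ h j, Adj h i → Adj i j →
          ∀ e ∈ ExtF h i, 0 ≤ Φ h i j e) ∧
        (∀ i, i ≠ s → i ≠ t → ∀ h j, Adj h i → Adj i j →
          ∀ e ∈ ExtF i j, 0 ≤ Ψ h i j e) ∧
        ((∑ j ∈ outN Adj s, z s j) - (∑ h ∈ inN Adj s, z h s) = 1) ∧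
        (∀ i, i ≠ s → i ≠ t →
          (∑ j ∈ outN Adj i, z i j) - (∑ h ∈ inN Adj i, z h i) = 0) ∧
        ((∑ j ∈ outN Adj t, z t j) - (∑ h ∈ inN Adj t, z h t) = -1) ∧
        (∀ i, (∑ h ∈ inN Adj i, z h i) ≤ 1) ∧
        (∀ i, (∑ j ∈ outN Adj i, z i j) ≤ 1) ∧
        ((∑ j ∈ outN Adj s,
            lpnorm (p s) ((∑ e ∈ ExtF s j, lam s j e • e) - z s j • xs)) ≤ dv s) ∧
        (∀ i, i ≠ s → i ≠ t →
          (∑ h ∈ inN Adj i, ∑ j ∈ outN Adj i,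
            lpnorm (p i) ((∑ e ∈ ExtF i j, Ψ h i j e • e)
              - (∑ e ∈ ExtF h i, Φ h i j e • e))) ≤ dv i) ∧
        ((∑ h ∈ inN Adj t,
            lpnorm (p t) (z h t • xt - (∑ e ∈ ExtF h t, lam h t e • e))) ≤ dv t) ∧
        (∀ i j, Adj i j → (∑ e ∈ ExtF i j, lam i j e) = z i j) ∧
        (∀ i, i ≠ s → i ≠ t → ∀ h, Adj h i →
          (∑ j ∈ outN Adj i, ρ h i j) = z h i) ∧
        (∀ i, i ≠ s → i ≠ t → ∀ j, Adj i j →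
          (∑ h ∈ inN Adj i, ρ h i j) = z i j) ∧
        (∀ i, i ≠ s → i ≠ t → ∀ h j, Adj h i → Adj i j →
          (∑ e ∈ ExtF h i, Φ h i j e) = ρ h i j) ∧
        (∀ i, i ≠ s → i ≠ t → ∀ h, Adj h i → ∀ e ∈ ExtF h i,
          (∑ j ∈ outN Adj i, Φ h i j e) = lam h i e) ∧
        (∀ i, i ≠ s → i ≠ t → ∀ h j, Adj h i → Adj i j →
          (∑ e ∈ ExtF i j, Ψ h i j e) = ρ h i j) ∧
        (∀ i, i ≠ s → i ≠ t → ∀ j, Adj i j → ∀ e ∈ ExtF i j,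
          (∑ h ∈ inN Adj i, Ψ h i j e) = lam i j e) ∧
        r = ∑ i, ω i * dv i} := by
  have hAdj_ne : ∀ i j, Adj i j → i ≠ j := fun i j h => ((hAdj i j).1 h).1
  apply csInf_eq_csInf_of_forall_exists_le
  · rintro _ ⟨n, γ, y, h0, hT, hγ, hadj, hy, rfl⟩
    obtain ⟨dv, z, lam, ρ, Φ, Ψ, hF, hcost⟩ := exists_isF2Feasible_of_path ω hp hst hγ h0 hT
      hadj fun l => hFpoly _ _ (hAdj_ne _ _ (hadj l)) ▸ hy l
    obtain ⟨h₁, h₂, h₃, h₄, h₅, h₆, h₇, h₈, h₉, h₁₀, h₁₁, h₁₂, h₁₃, h₁₄, h₁₅, h₁₆, h₁₇, h₁₈, h₁₉,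
      h₂₀, h₂₁⟩ := hF
    exact ⟨_, ⟨dv, z, lam, ρ, Φ, Ψ, h₁, h₂, h₃, h₄, h₅, h₆, h₇, h₈, h₉, h₁₀, h₁₁, h₁₂, h₁₃, h₁₄,
      h₁₅, h₁₆, h₁₇, h₁₈, h₁₉, h₂₀, h₂₁, rfl⟩, hcost.ge⟩
  · rintro _ ⟨dv, z, lam, ρ, Φ, Ψ, h₁, h₂, h₃, h₄, h₅, h₆, h₇, h₈, h₉, h₁₀, h₁₁, h₁₂, h₁₃, h₁₄,
      h₁₅, h₁₆, h₁₇, h₁₈, h₁₉, h₂₀, h₂₁, rfl⟩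
    have hF : IsF2Feasible p ExtF Adj s t xs xt dv z lam ρ Φ Ψ := ⟨h₁, h₂, h₃, h₄, h₅, h₆, h₇, h₈,
      h₉, h₁₀, h₁₁, h₁₂, h₁₃, h₁₄, h₁₅, h₁₆, h₁₇, h₁₈, h₁₉, h₂₀, h₂₁⟩
    obtain ⟨n, γ, y, h0, hT, hγ, hadj, hy, hcost⟩ :=
      hF.exists_path_cost_le ω hFpoly hp (fun i => (hω i).le) hAdj_ne hst
    exact ⟨_, ⟨n, γ, y, h0, hT, hγ, hadj, hy, rfl⟩, hcost⟩

/-- Equivalence of Problem (SPP) and formulation (SPP-F2): the geodesic distance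
`D(x_s,x_t)` (infimum over simple paths and gate points) equals the optimal value of
the mixed-integer program (SPP-F2). -/
theorem stmt_11 {d m : ℕ}
    (P : Fin m → Set (Fin d → ℝ))
    (Ext : Fin m → Finset (Fin d → ℝ))
    (hExt : ∀ i, (Ext i : Set (Fin d → ℝ)) = Set.extremePoints ℝ (P i))
    (hP : ∀ i, P i = convexHull ℝ (Ext i : Set (Fin d → ℝ)))
    (hdisj : ∀ i j, i ≠ j → interior (P i) ∩ interior (P j) = ∅)
    (p : Fin m → ℝ≥0∞) (hp : ∀ i, 1 ≤ p i)
    (ω : Fin m → ℝ) (hω : ∀ i, 0 < ω i)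
    (ExtF : Fin m → Fin m → Finset (Fin d → ℝ))
    (hExtF : ∀ i j, i ≠ j → (ExtF i j : Set (Fin d → ℝ)) = Set.extremePoints ℝ (P i ∩ P j))
    (hFpoly : ∀ i j, i ≠ j → P i ∩ P j = convexHull ℝ (ExtF i j : Set (Fin d → ℝ)))
    (Adj : Fin m → Fin m → Prop)
    (hAdj : ∀ i j, Adj i j ↔ i ≠ j ∧ (P i ∩ P j).Nonempty)
    (s t : Fin m) (hst : s ≠ t)
    (xs xt : Fin d → ℝ) (hxs : xs ∈ P s) (hxt : xt ∈ P t) :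
    sInf {r : ℝ | ∃ (n : ℕ) (γ : Fin (n + 2) → Fin m) (y : Fin (n + 1) → (Fin d → ℝ)),
        γ 0 = s ∧ γ (Fin.last (n + 1)) = t ∧ Function.Injective γ ∧
        (∀ l : Fin (n + 1), Adj (γ l.castSucc) (γ l.succ)) ∧
        (∀ l : Fin (n + 1), y l ∈ P (γ l.castSucc) ∩ P (γ l.succ)) ∧
        r = ω s * lpnorm (p s) (y 0 - xs)
            + (∑ l : Fin n, ω (γ l.succ.castSucc) *
                lpnorm (p (γ l.succ.castSucc)) (y l.succ - y l.castSucc))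
            + ω t * lpnorm (p t) (xt - y (Fin.last n))}
    = sInf {r : ℝ | ∃ (dv : Fin m → ℝ) (z : Fin m → Fin m → ℝ)
        (lam : Fin m → Fin m → (Fin d → ℝ) → ℝ)
        (ρ : Fin m → Fin m → Fin m → ℝ)
        (Φ : Fin m → Fin m → Fin m → (Fin d → ℝ) → ℝ)
        (Ψ : Fin m → Fin m → Fin m → (Fin d → ℝ) → ℝ),
        (∀ i, 0 ≤ dv i) ∧
        (∀ i j, Adj i j → (z i j = 0 ∨ z i j = 1)) ∧
        (∀ i j, Adj i j → ∀ e ∈ ExtF i j, 0 ≤ lam i j e) ∧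
        (∀ i, i ≠ s → i ≠ t → ∀ h j, Adj h i → Adj i j → 0 ≤ ρ h i j) ∧
        (∀ i, i ≠ s → i ≠ t → ∀ h j, Adj h i → Adj i j →
          ∀ e ∈ ExtF h i, 0 ≤ Φ h i j e) ∧
        (∀ i, i ≠ s → i ≠ t → ∀ h j, Adj h i → Adj i j →
          ∀ e ∈ ExtF i j, 0 ≤ Ψ h i j e) ∧
        ((∑ j ∈ outN Adj s, z s j) - (∑ h ∈ inN Adj s, z h s) = 1) ∧
        (∀ i, i ≠ s → i ≠ t →
          (∑ j ∈ outN Adj i, z i j) - (∑ h ∈ inN Adj i, z h i) = 0) ∧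
        ((∑ j ∈ outN Adj t, z t j) - (∑ h ∈ inN Adj t, z h t) = -1) ∧
        (∀ i, (∑ h ∈ inN Adj i, z h i) ≤ 1) ∧
        (∀ i, (∑ j ∈ outN Adj i, z i j) ≤ 1) ∧
        ((∑ j ∈ outN Adj s,
            lpnorm (p s) ((∑ e ∈ ExtF s j, lam s j e • e) - z s j • xs)) ≤ dv s) ∧
        (∀ i, i ≠ s → i ≠ t →
          (∑ h ∈ inN Adj i, ∑ j ∈ outN Adj i,
            lpnorm (p i) ((∑ e ∈ ExtF i j, Ψ h i j e • e)
              - (∑ e ∈ ExtF h i, Φ h i j e • e))) ≤ dv i) ∧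
        ((∑ h ∈ inN Adj t,
            lpnorm (p t) (z h t • xt - (∑ e ∈ ExtF h t, lam h t e • e))) ≤ dv t) ∧
        (∀ i j, Adj i j → (∑ e ∈ ExtF i j, lam i j e) = z i j) ∧
        (∀ i, i ≠ s → i ≠ t → ∀ h, Adj h i →
          (∑ j ∈ outN Adj i, ρ h i j) = z h i) ∧
        (∀ i, i ≠ s → i ≠ t → ∀ j, Adj i j →
          (∑ h ∈ inN Adj i, ρ h i j) = z i j) ∧
        (∀ i, i ≠ s → i ≠ t → ∀ h j, Adj h i → Adj i j →
          (∑ e ∈ ExtF h i, Φ h i j e) = ρ h i j) ∧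
        (∀ i, i ≠ s → i ≠ t → ∀ h, Adj h i → ∀ e ∈ ExtF h i,
          (∑ j ∈ outN Adj i, Φ h i j e) = lam h i e) ∧
        (∀ i, i ≠ s → i ≠ t → ∀ h j, Adj h i → Adj i j →
          (∑ e ∈ ExtF i j, Ψ h i j e) = ρ h i j) ∧
        (∀ i, i ≠ s → i ≠ t → ∀ j, Adj i j → ∀ e ∈ ExtF i j,
          (∑ h ∈ inN Adj i, Ψ h i j e) = lam i j e) ∧
        r = ∑ i, ω i * dv i} :=
  stmt_11_general P p hp ω hω ExtF hFpoly Adj hAdj s t hst xs xt
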